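/- Let λ = (λ₁, …, λ_D) ∈ ℝ^D with λ₁ ≥ ⋯ ≥ λ_D ≥ 0, let λ(d,D) = (1/(d+2))(1,…,1,0,…,0) with d ones, and let 0 < η < 1/(2d). If ‖λ − λ(d,D)‖₂ < 1/(3√D·(1+η⁻¹)), then Thr(λ, η) = d, where Thr(λ, η) is the smallest k such that λ_{k+1} + ⋯ + λ_D ≤ η·(λ₁ + ⋯ + λ_D). -/

import Mathlib

/-!
Write `ε = η / (3 (1 + η))`, so that the hypothesis says `√D ‖λ - λ(d,D)‖ < ε`, and by Cauchy–Schwarz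
the `ℓ¹` distance from `λ` to `λ(d,D)` is below `ε`. Hence the total mass of `λ` is within `ε` of
`d/(d+2)`, the tail beyond `d` has mass below `ε`, and `λ_d > 1/(d+2) - ε`. The choice of `ε`
(`ε (1 + η) = η/3`) together with `η < 1/(2d)` places `η ∑ λ` strictly between `ε` and
`1/(d+2) - ε`, so the tail condition holds at `d` and fails at every `k < d`, where the tail contains `λ_d`.
-/

open Finset

/-- Tail-sum thresholding dimension estimator: the smallest `k` such that
`λ_{k+1} + ⋯ + λ_D ≤ η (λ_1 + ⋯ + λ_D)`. -/
noncomputable def Thr {D : ℕ} (lam : Fin D → ℝ) (η : ℝ) : ℕ :=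
  sInf {k : ℕ | ∑ i, (if k ≤ i.val then lam i else 0) ≤ η * ∑ i, lam i}

/-- The vector with `d` entries equal to `1/(d+2)` followed by `D - d` zeros. -/
noncomputable def lamVec (d D : ℕ) : EuclideanSpace ℝ (Fin D) :=
  WithLp.toLp 2 (fun i => if (i : ℕ) < d then 1 / ((d : ℝ) + 2) else 0)

theorem EuclideanSpace.sum_abs_le_sqrt_card_mul_norm {ι : Type*} [Fintype ι]
    (x : EuclideanSpace ℝ ι) : ∑ i, |x i| ≤ √(Fintype.card ι) * ‖x‖ := by
  simpa [EuclideanSpace.norm_eq] using Real.sum_mul_le_sqrt_mul_sqrt univ (fun _ ↦ 1) (|x ·|)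

/-- `λ_{k+1} + ⋯ + λ_D` in the paper's 1-based indexing. -/
noncomputable def tailSum {D : ℕ} (lam : Fin D → ℝ) (k : ℕ) : ℝ :=
  ∑ i, if k ≤ i.val then lam i else 0

theorem Thr_eq_of_tailSum {D : ℕ} {lam : Fin D → ℝ} {η : ℝ} {d : ℕ}
    (hd : tailSum lam d ≤ η * ∑ i, lam i) (hlt : ∀ k < d, η * ∑ i, lam i < tailSum lam k) :
    Thr lam η = d :=
  le_antisymm (Nat.sInf_le hd) <|
    le_csInf ⟨d, hd⟩ fun k hk ↦ not_lt.1 fun hkd ↦ (hlt k hkd).not_ge hk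

theorem le_tailSum {D : ℕ} {lam : Fin D → ℝ} (hnn : ∀ i, 0 ≤ lam i) {k : ℕ} {j : Fin D}
    (hkj : k ≤ j) : lam j ≤ tailSum lam k := by
  simpa [tailSum, hkj] using single_le_sum (f := fun i : Fin D ↦ if k ≤ i.val then lam i else 0)
    (fun i _ ↦ by split_ifs <;> simp [hnn i]) (mem_univ j)

theorem tailSum_le_sum_abs_sub {D : ℕ} {x y : Fin D → ℝ} {k : ℕ}
    (hy : ∀ i : Fin D, k ≤ i → y i = 0) : tailSum x k ≤ ∑ i, |x i - y i| := by
  refine sum_le_sum fun i _ ↦ ?_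
  split_ifs with h
  · simpa [hy i h] using le_abs_self (x i)
  · exact abs_nonneg _

theorem lamVec_apply_of_lt {d D : ℕ} {i : Fin D} (h : (i : ℕ) < d) :
    lamVec d D i = 1 / ((d : ℝ) + 2) := by
  simp [lamVec, h]

theorem lamVec_apply_of_le {d D : ℕ} {i : Fin D} (h : d ≤ i) : lamVec d D i = 0 := by
  simp [lamVec, h]

theorem sum_lamVec {d D : ℕ} (hdD : d ≤ D) : ∑ i, lamVec d D i = d / ((d : ℝ) + 2) := by
  simp [lamVec, Finset.sum_ite, Fin.card_filter_val_lt, min_eq_right hdD, div_eq_mul_inv]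

theorem threshold_gap {d η ε S : ℝ} (hd : 1 ≤ d) (hη0 : 0 < η) (hη : η < 1 / (2 * d))
    (hε : ε * (1 + η) = η / 3) (hS : |S - d / (d + 2)| < ε) :
    ε < η * S ∧ η * S < 1 / (d + 2) - ε := by
  obtain ⟨hSlo, hShi⟩ := abs_lt.1 hS
  have hηd : η * d < 1 / 2 := by
    rw [lt_div_iff₀ (by positivity)] at hη; linarith
  have hthird : 1 / 3 ≤ d / (d + 2) := by
    rw [div_le_div_iff₀ (by norm_num) (by linarith)]; linarith
  have hηc : η * (d / (d + 2)) < 1 / (2 * (d + 2)) := by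
    rw [mul_div_assoc', div_lt_div_iff₀ (by positivity) (by positivity)]; nlinarith
  have hε3 : η / 3 < 1 / (2 * (d + 2)) := by
    rw [div_lt_div_iff₀ (by norm_num) (by positivity)]; nlinarith
  have hhalf : 1 / (d + 2) = 2 * (1 / (2 * (d + 2))) := by field_simp
  constructor
  · linarith [mul_le_mul_of_nonneg_left hthird hη0.le, mul_lt_mul_of_pos_left hSlo hη0]
  · linarith [mul_lt_mul_of_pos_left hShi hη0]

theorem stmt14_general {D d : ℕ} (hd : 1 ≤ d) (hdD : d ≤ D)
    (lam : EuclideanSpace ℝ (Fin D))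
    (hnn : ∀ i, 0 ≤ lam i)
    (η : ℝ) (hη0 : 0 < η) (hη : η < 1 / (2 * (d : ℝ)))
    (hclose : ‖lam - lamVec d D‖ < 1 / (3 * Real.sqrt D * (1 + η⁻¹))) :
    Thr lam η = d := by
  set ε := η / (3 * (1 + η)) with hε
  have hl1 : ∑ i, |lam i - lamVec d D i| < ε := by
    have hD : 0 < √(D : ℝ) := Real.sqrt_pos.2 (by exact_mod_cast hd.trans hdD)
    calc _ ≤ √D * ‖lam - lamVec d D‖ := by
          simpa using EuclideanSpace.sum_abs_le_sqrt_card_mul_norm (lam - lamVec d D)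
      _ < √D * (1 / (3 * √D * (1 + η⁻¹))) := by gcongr
      _ = ε := by rw [hε]; field_simp; ring
  have hS : |∑ i, lam i - d / (d + 2)| < ε := by
    rw [← sum_lamVec hdD, ← sum_sub_distrib]
    exact (abs_sum_le_sum_abs _ _).trans_lt hl1
  obtain ⟨hεS, hSc⟩ := threshold_gap (by exact_mod_cast hd) hη0 hη (by rw [hε]; field_simp) hS
  refine Thr_eq_of_tailSum ?_ fun k hk ↦ ?_
  · exact (((tailSum_le_sum_abs_sub fun _ ↦ lamVec_apply_of_le).trans_lt hl1).trans hεS).le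
  · let j : Fin D := ⟨d - 1, by omega⟩
    have hj : |lam j - 1 / (d + 2)| < ε := by
      rw [← lamVec_apply_of_lt (i := j) (show d - 1 < d by omega)]
      exact (single_le_sum (fun i _ ↦ abs_nonneg (lam i - lamVec d D i)) (mem_univ j)).trans_lt hl1
    linarith [(abs_lt.1 hj).1, le_tailSum hnn (j := j) (show k ≤ d - 1 by omega)]

theorem stmt14 {D d : ℕ} (hd : 1 ≤ d) (hdD : d ≤ D)
    (lam : EuclideanSpace ℝ (Fin D))
    (hmono : ∀ i j : Fin D, i ≤ j → lam j ≤ lam i) (hnn : ∀ i, 0 ≤ lam i)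
    (η : ℝ) (hη0 : 0 < η) (hη : η < 1 / (2 * (d : ℝ)))
    (hclose : ‖lam - lamVec d D‖ < 1 / (3 * Real.sqrt D * (1 + η⁻¹))) :
    Thr lam η = d :=
  stmt14_general hd hdD lam hnn η hη0 hη hclose
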